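/- For a piecewise contracting interval map f satisfying the separation property, and any x ∈ X̃ with itinerary θ, one has #Δ_lr^n(x) ≤ p(θ, n+1) − p(θ, n) ≤ #Δ for all n ≥ 1, where Δ_lr^n(x) is the set of n-left-right-visited discontinuities. -/
import Mathlib


open Set

/-- The contraction pieces of a piecewise contracting interval map on `[c 0, c N]`:
`X₁ = [c₀, c₁)`, `Xᵢ = (c_{i-1}, c_i)` for `1 < i < N`, `X_N = (c_{N-1}, c_N]`. -/
def ivlPiece (N : ℕ) (c : ℕ → ℝ) (i : Fin N) : Set ℝ :=
  if i.val = 0 then Set.Ico (c 0) (c 1)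
  else if i.val = N - 1 then Set.Ioc (c (N - 1)) (c N)
  else Set.Ioo (c i.val) (c (i.val + 1))

/-- The atom of a word `w = [i₁, …, iₙ]`:
`A_{i₁…iₙ} = F_{iₙ} ∘ ⋯ ∘ F_{i₁}(X)`, `F_i(A) = closure (f '' (A ∩ X_i))`, `X = [c 0, c N]`. -/
def ivlAtom (N : ℕ) (c : ℕ → ℝ) (f : ℝ → ℝ) (w : List (Fin N)) : Set ℝ :=
  w.foldl (fun A i => closure (f '' (A ∩ ivlPiece N c i))) (Set.Icc (c 0) (c N))

/-- The discontinuity set `Δ = {c₁, …, c_{N-1}}`. -/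
def ivlDelta (N : ℕ) (c : ℕ → ℝ) : Set ℝ :=
  {y | ∃ i : ℕ, 0 < i ∧ i < N ∧ y = c i}

/-- `Δ_lr^n(x)`: the discontinuities `c_i` that are n-left-right visited by the orbit of
`x`: some atom of generation `n` visited by the orbit of `f^n(x)` contains `c_i` and the
orbit enters it on both sides of `c_i`. -/
def ivlDeltaLRn (N : ℕ) (c : ℕ → ℝ) (f : ℝ → ℝ) (n : ℕ) (x : ℝ) : Set ℝ :=
  {y | ∃ i : ℕ, ∃ h1 : 0 < i, ∃ h2 : i < N, y = c i ∧
    ∃ w : List (Fin N), w.length = n ∧ y ∈ ivlAtom N c f w ∧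
      (∃ t : ℕ, f^[t + n] x ∈ ivlAtom N c f w ∩ ivlPiece N c ⟨i - 1, by omega⟩) ∧
      (∃ t : ℕ, f^[t + n] x ∈ ivlAtom N c f w ∩ ivlPiece N c ⟨i, h2⟩)}

/-- `Δ_lr(x)`: the discontinuities that are left-right recurrently visited. -/
def ivlDeltaLR (N : ℕ) (c : ℕ → ℝ) (f : ℝ → ℝ) (x : ℝ) : Set ℝ :=
  {y | ∀ n : ℕ, 1 ≤ n → y ∈ ivlDeltaLRn N c f n x}

/-- The word `θ_t θ_{t+1} … θ_{t+n-1}`. -/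
def itinWord {N : ℕ} (θ : ℕ → Fin N) (t n : ℕ) : List (Fin N) :=
  (List.range n).map fun k => θ (t + k)

/-- The set of factors of length `n` of `θ`. -/
def seqFactors {N : ℕ} (θ : ℕ → Fin N) (n : ℕ) : Set (List (Fin N)) :=
  {w | ∃ t : ℕ, w = itinWord θ t n}

/-- The complexity function `p(θ, n)`. -/
noncomputable def seqComplexity {N : ℕ} (θ : ℕ → Fin N) (n : ℕ) : ℕ :=
  (seqFactors θ n).ncard

section Aux

variable {N : ℕ} {c : ℕ → ℝ} {f : ℝ → ℝ} {g : Fin N → ℝ → ℝ} {x : ℝ} {θ : ℕ → Fin N}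

lemma cmono' (hc : ∀ i : ℕ, i < N → c i < c (i + 1)) :
    ∀ {j i : ℕ}, i < j → j ≤ N → c i < c j := by
  intro j
  induction j with
  | zero => intro i h1 _; omega
  | succ j ih =>
    intro i hij hjN
    rcases Nat.lt_or_ge i j with h | h
    · exact lt_trans (ih h (by omega)) (hc j (by omega))
    · have : i = j := by omega
      subst this; exact hc i (by omega)

lemma cmono (hc : ∀ i : ℕ, i < N → c i < c (i + 1)) :
    ∀ {i j : ℕ}, i ≤ j → j ≤ N → c i ≤ c j := by
  intro i j h1 h2
  rcases Nat.eq_or_lt_of_le h1 with h | h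
  · exact le_of_eq (by rw [h])
  · exact le_of_lt (cmono' hc h h2)

lemma piece_mem (hN : 2 ≤ N) {i : Fin N} {y : ℝ} (h : y ∈ ivlPiece N c i) :
    c i.val ≤ y ∧ y ≤ c (i.val + 1) ∧ (0 < i.val → c i.val < y) ∧
      (i.val + 1 < N → y < c (i.val + 1)) := by
  have hiN := i.isLt
  unfold ivlPiece at h
  split_ifs at h with h0 h1
  · rw [h0]
    exact ⟨h.1, le_of_lt h.2, by omega, fun _ => h.2⟩
  · refine ⟨?_, ?_, fun _ => ?_, fun hlt => by omega⟩
    · rw [h1]; exact le_of_lt h.1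
    · have e : i.val + 1 = N := by omega
      rw [e]; exact h.2
    · rw [h1]; exact h.1
  · exact ⟨le_of_lt h.1, le_of_lt h.2, fun _ => h.1, fun _ => h.2⟩

lemma piece_lt (hN : 2 ≤ N) (hc : ∀ i : ℕ, i < N → c i < c (i + 1))
    {i j : Fin N} (hij : i.val < j.val) {y z : ℝ}
    (hy : y ∈ ivlPiece N c i) (hz : z ∈ ivlPiece N c j) : y < z := by
  have hjN := j.isLt
  have p1 := (piece_mem hN hy).2.2.2 (by omega)
  have p2 := (piece_mem hN hz).2.2.1 (by omega)
  have p3 : c (i.val + 1) ≤ c j.val := cmono hc (by omega) (by omega)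
  linarith

lemma piece_disjoint (hN : 2 ≤ N) (hc : ∀ i : ℕ, i < N → c i < c (i + 1))
    {i j : Fin N} (hij : i ≠ j) {y : ℝ}
    (hy : y ∈ ivlPiece N c i) (hz : y ∈ ivlPiece N c j) : False := by
  have : i.val ≠ j.val := fun h => hij (Fin.ext h)
  rcases Nat.lt_or_ge i.val j.val with h | h
  · exact lt_irrefl y (piece_lt hN hc h hy hz)
  · exact lt_irrefl y (piece_lt hN hc (by omega) hz hy)

lemma theta_eq (hN : 2 ≤ N) (hc : ∀ i : ℕ, i < N → c i < c (i + 1))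
    (hθ : ∀ t : ℕ, f^[t] x ∈ ivlPiece N c (θ t)) (t : ℕ) {j : Fin N}
    (hj : f^[t] x ∈ ivlPiece N c j) : θ t = j := by
  by_contra h
  exact piece_disjoint hN hc h (hθ t) hj

lemma piece_subset_Icc (hN : 2 ≤ N) (hc : ∀ i : ℕ, i < N → c i < c (i + 1))
    {i : Fin N} {y : ℝ} (h : y ∈ ivlPiece N c i) : y ∈ Set.Icc (c 0) (c N) := by
  have hiN := i.isLt
  have p := piece_mem hN h
  exact ⟨le_trans (cmono hc (by omega) (by omega)) p.1,
    le_trans p.2.1 (cmono hc (by omega) (le_refl N))⟩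

lemma piece_ordConn (i : Fin N) : (ivlPiece N c i).OrdConnected := by
  unfold ivlPiece
  split_ifs
  exacts [Set.ordConnected_Ico, Set.ordConnected_Ioc, Set.ordConnected_Ioo]

lemma orbit_mem_Icc (hmap : Set.MapsTo f (Set.Icc (c 0) (c N)) (Set.Icc (c 0) (c N)))
    (hx : x ∈ Set.Icc (c 0) (c N)) : ∀ t : ℕ, f^[t] x ∈ Set.Icc (c 0) (c N) := by
  intro t
  induction t with
  | zero => simpa using hx
  | succ t ih => rw [Function.iterate_succ_apply']; exact hmap ih

lemma atom_nil : ivlAtom N c f ([] : List (Fin N)) = Set.Icc (c 0) (c N) := rfl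

lemma atom_concat (w : List (Fin N)) (a : Fin N) :
    ivlAtom N c f (w ++ [a]) = closure (f '' (ivlAtom N c f w ∩ ivlPiece N c a)) := by
  simp [ivlAtom, List.foldl_append]

lemma atom_props (hN : 2 ≤ N) (hc : ∀ i : ℕ, i < N → c i < c (i + 1))
    (hmap : Set.MapsTo f (Set.Icc (c 0) (c N)) (Set.Icc (c 0) (c N)))
    (hg : ∀ i : Fin N,
      ContinuousOn (g i) (closure (ivlPiece N c i)) ∧
      Set.EqOn (g i) f (ivlPiece N c i) ∧
      Set.InjOn (g i) (closure (ivlPiece N c i)) ∧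
      ∀ j : Fin N, j ≠ i →
        Disjoint (g i '' closure (ivlPiece N c i)) (g j '' closure (ivlPiece N c j))) :
    ∀ w : List (Fin N), ivlAtom N c f w ⊆ Set.Icc (c 0) (c N) ∧
      IsClosed (ivlAtom N c f w) ∧ IsPreconnected (ivlAtom N c f w) := by
  intro w
  induction w using List.reverseRecOn with
  | nil => exact ⟨subset_rfl, isClosed_Icc, isPreconnected_Icc⟩
  | append_singleton v a ih =>
    obtain ⟨hsub, hcl, hpc⟩ := ih
    rw [atom_concat]
    refine ⟨?_, isClosed_closure, ?_⟩
    · refine closure_minimal ?_ isClosed_Icc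
      rintro _ ⟨z, ⟨hzA, _⟩, rfl⟩
      exact hmap (hsub hzA)
    · have h1 : (ivlAtom N c f v ∩ ivlPiece N c a).OrdConnected :=
        (hpc.ordConnected).inter (piece_ordConn a)
      have h2 : IsPreconnected (ivlAtom N c f v ∩ ivlPiece N c a) := h1.isPreconnected
      have h3 : f '' (ivlAtom N c f v ∩ ivlPiece N c a)
          = g a '' (ivlAtom N c f v ∩ ivlPiece N c a) :=
        Set.image_congr fun z hz => ((hg a).2.1 hz.2).symm
      rw [h3]
      exact (h2.image _ ((hg a).1.mono
        (subset_trans Set.inter_subset_right subset_closure))).closure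

lemma atom_compact (hN : 2 ≤ N) (hc : ∀ i : ℕ, i < N → c i < c (i + 1))
    (hmap : Set.MapsTo f (Set.Icc (c 0) (c N)) (Set.Icc (c 0) (c N)))
    (hg : ∀ i : Fin N,
      ContinuousOn (g i) (closure (ivlPiece N c i)) ∧
      Set.EqOn (g i) f (ivlPiece N c i) ∧
      Set.InjOn (g i) (closure (ivlPiece N c i)) ∧
      ∀ j : Fin N, j ≠ i →
        Disjoint (g i '' closure (ivlPiece N c i)) (g j '' closure (ivlPiece N c j)))
    (w : List (Fin N)) : IsCompact (ivlAtom N c f w) :=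
  IsCompact.of_isClosed_subset isCompact_Icc (atom_props hN hc hmap hg w).2.1
    (atom_props hN hc hmap hg w).1

lemma atom_sub_image (hN : 2 ≤ N) (hc : ∀ i : ℕ, i < N → c i < c (i + 1))
    (hmap : Set.MapsTo f (Set.Icc (c 0) (c N)) (Set.Icc (c 0) (c N)))
    (hg : ∀ i : Fin N,
      ContinuousOn (g i) (closure (ivlPiece N c i)) ∧
      Set.EqOn (g i) f (ivlPiece N c i) ∧
      Set.InjOn (g i) (closure (ivlPiece N c i)) ∧
      ∀ j : Fin N, j ≠ i →
        Disjoint (g i '' closure (ivlPiece N c i)) (g j '' closure (ivlPiece N c j)))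
    (v : List (Fin N)) (a : Fin N) :
    ivlAtom N c f (v ++ [a]) ⊆ g a '' (ivlAtom N c f v ∩ closure (ivlPiece N c a)) := by
  rw [atom_concat]
  have hK : IsCompact (ivlAtom N c f v ∩ closure (ivlPiece N c a)) :=
    (atom_compact hN hc hmap hg v).inter_right isClosed_closure
  have hKi : IsCompact (g a '' (ivlAtom N c f v ∩ closure (ivlPiece N c a))) :=
    hK.image_of_continuousOn ((hg a).1.mono Set.inter_subset_right)
  refine closure_minimal ?_ hKi.isClosed
  rintro _ ⟨z, hz, rfl⟩
  exact ⟨z, ⟨hz.1, subset_closure hz.2⟩, (hg a).2.1 hz.2⟩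

lemma atoms_disjoint (hN : 2 ≤ N) (hc : ∀ i : ℕ, i < N → c i < c (i + 1))
    (hmap : Set.MapsTo f (Set.Icc (c 0) (c N)) (Set.Icc (c 0) (c N)))
    (hg : ∀ i : Fin N,
      ContinuousOn (g i) (closure (ivlPiece N c i)) ∧
      Set.EqOn (g i) f (ivlPiece N c i) ∧
      Set.InjOn (g i) (closure (ivlPiece N c i)) ∧
      ∀ j : Fin N, j ≠ i →
        Disjoint (g i '' closure (ivlPiece N c i)) (g j '' closure (ivlPiece N c j))) :
    ∀ (w w' : List (Fin N)), w.length = w'.length → w ≠ [] → w ≠ w' →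
      ∀ y : ℝ, y ∈ ivlAtom N c f w → y ∈ ivlAtom N c f w' → False := by
  intro w
  induction w using List.reverseRecOn with
  | nil => intro w' _ hne _ _ _ _; exact hne rfl
  | append_singleton v a ih =>
    intro w' hlen hne hww y hyw hyw'
    rcases w'.eq_nil_or_concat with rfl | ⟨v', a', rfl⟩
    · simp at hlen
    · rw [List.concat_eq_append] at hyw' hww hlen
      obtain ⟨z, ⟨hzv, hzc⟩, hz⟩ := atom_sub_image hN hc hmap hg v a hyw
      obtain ⟨z', ⟨hzv', hzc'⟩, hz'⟩ := atom_sub_image hN hc hmap hg v' a' hyw'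
      by_cases haa : a = a'
      · subst haa
        have hvv : v ≠ v' := by
          intro h; exact hww (by rw [h])
        have hlen' : v.length = v'.length := by
          simpa using hlen
        have hzz : z = z' := (hg a).2.2.1 hzc hzc' (by rw [hz, hz'])
        rcases List.eq_nil_or_concat v with hv | ⟨u, b, hub⟩
        · have hv' : v' = [] := by
            rw [hv] at hlen'; exact List.eq_nil_of_length_eq_zero hlen'.symm
          exact hvv (by rw [hv, hv'])
        · have hvne : v ≠ [] := by rw [hub]; simp
          exact ih v' hlen' hvne hvv z hzv (hzz ▸ hzv')
      · have hd := (hg a).2.2.2 a' (fun h => haa h.symm)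
        have hy1 : y ∈ g a '' closure (ivlPiece N c a) := ⟨z, hzc, hz⟩
        have hy2 : y ∈ g a' '' closure (ivlPiece N c a') := ⟨z', hzc', hz'⟩
        exact (Set.disjoint_left.mp hd hy1) hy2

lemma itinWord_length (t n : ℕ) : (itinWord θ t n).length = n := by simp [itinWord]

lemma itinWord_succ (t n : ℕ) :
    itinWord θ t (n + 1) = itinWord θ t n ++ [θ (t + n)] := by
  simp [itinWord, List.range_succ]

lemma orbit_mem_atom (hmap : Set.MapsTo f (Set.Icc (c 0) (c N)) (Set.Icc (c 0) (c N)))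
    (hx : x ∈ Set.Icc (c 0) (c N))
    (hθ : ∀ t : ℕ, f^[t] x ∈ ivlPiece N c (θ t)) :
    ∀ t n : ℕ, f^[t + n] x ∈ ivlAtom N c f (itinWord θ t n) := by
  intro t n
  induction n with
  | zero => simpa [itinWord, atom_nil] using orbit_mem_Icc hmap hx t
  | succ m ihm =>
    rw [itinWord_succ, atom_concat]
    have e : t + (m + 1) = (t + m) + 1 := by omega
    rw [e, Function.iterate_succ_apply']
    exact subset_closure ⟨f^[t + m] x, ⟨ihm, hθ (t + m)⟩, rfl⟩

lemma word_eq_itin (hN : 2 ≤ N) (hc : ∀ i : ℕ, i < N → c i < c (i + 1))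
    (hmap : Set.MapsTo f (Set.Icc (c 0) (c N)) (Set.Icc (c 0) (c N)))
    (hg : ∀ i : Fin N,
      ContinuousOn (g i) (closure (ivlPiece N c i)) ∧
      Set.EqOn (g i) f (ivlPiece N c i) ∧
      Set.InjOn (g i) (closure (ivlPiece N c i)) ∧
      ∀ j : Fin N, j ≠ i →
        Disjoint (g i '' closure (ivlPiece N c i)) (g j '' closure (ivlPiece N c j)))
    (hx : x ∈ Set.Icc (c 0) (c N))
    (hθ : ∀ t : ℕ, f^[t] x ∈ ivlPiece N c (θ t))
    {t n : ℕ} {w : List (Fin N)} (hn : 1 ≤ n) (hwl : w.length = n)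
    (hmem : f^[t + n] x ∈ ivlAtom N c f w) : itinWord θ t n = w := by
  by_contra hneq
  have h1 := orbit_mem_atom hmap hx hθ t n
  have hlen : (itinWord θ t n).length = w.length := by rw [itinWord_length, hwl]
  have hnn : itinWord θ t n ≠ [] := by
    intro h
    have := itinWord_length (θ := θ) t n
    rw [h] at this; simp at this; omega
  exact atoms_disjoint hN hc hmap hg _ w hlen hnn hneq _ h1 hmem

lemma mem_factors_succ {n : ℕ} {w : List (Fin N)} {a : Fin N}
    (h : w ++ [a] ∈ seqFactors θ (n + 1)) :
    ∃ t : ℕ, itinWord θ t n = w ∧ θ (t + n) = a := by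
  obtain ⟨t, ht⟩ := h
  rw [itinWord_succ] at ht
  rw [← List.concat_eq_append, ← List.concat_eq_append, List.concat_inj] at ht
  exact ⟨t, ht.1.symm, ht.2.symm⟩

lemma atom_meets (hmap : Set.MapsTo f (Set.Icc (c 0) (c N)) (Set.Icc (c 0) (c N)))
    (hx : x ∈ Set.Icc (c 0) (c N))
    (hθ : ∀ t : ℕ, f^[t] x ∈ ivlPiece N c (θ t))
    {n : ℕ} {w : List (Fin N)} {a : Fin N} (h : w ++ [a] ∈ seqFactors θ (n + 1)) :
    ∃ z : ℝ, z ∈ ivlAtom N c f w ∩ ivlPiece N c a := by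
  obtain ⟨t, h1, h2⟩ := mem_factors_succ h
  exact ⟨f^[t + n] x, h1 ▸ orbit_mem_atom hmap hx hθ t n, h2 ▸ hθ (t + n)⟩

lemma atom_contains_c (hN : 2 ≤ N) (hc : ∀ i : ℕ, i < N → c i < c (i + 1))
    (hmap : Set.MapsTo f (Set.Icc (c 0) (c N)) (Set.Icc (c 0) (c N)))
    (hg : ∀ i : Fin N,
      ContinuousOn (g i) (closure (ivlPiece N c i)) ∧
      Set.EqOn (g i) f (ivlPiece N c i) ∧
      Set.InjOn (g i) (closure (ivlPiece N c i)) ∧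
      ∀ j : Fin N, j ≠ i →
        Disjoint (g i '' closure (ivlPiece N c i)) (g j '' closure (ivlPiece N c j)))
    {w : List (Fin N)} {a₀ a : Fin N} (hlt : a₀.val < a.val)
    {z₀ z : ℝ} (h₀ : z₀ ∈ ivlAtom N c f w ∩ ivlPiece N c a₀)
    (h : z ∈ ivlAtom N c f w ∩ ivlPiece N c a) :
    c a.val ∈ ivlAtom N c f w := by
  have haN := a.isLt
  have hoc : (ivlAtom N c f w).OrdConnected :=
    ((atom_props hN hc hmap hg w).2.2).ordConnected
  have p₀ := piece_mem hN h₀.2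
  have p := piece_mem hN h.2
  have h1 : z₀ ≤ c a.val :=
    le_trans (le_of_lt (p₀.2.2.2 (by omega))) (cmono hc (by omega) (by omega))
  exact hoc.out h₀.1 h.1 ⟨h1, p.1⟩

lemma factors_finite (θ : ℕ → Fin N) (n : ℕ) : (seqFactors θ n).Finite :=
  (List.finite_length_eq (Fin N) n).subset (by rintro w ⟨t, rfl⟩; simp [itinWord])

end Aux

set_option maxHeartbeats 1000000 in
/-- `#Δ_lr^n(x) ≤ p(θ,n+1) − p(θ,n) ≤ #Δ` for every `n ≥ 1`. -/
theorem stmt9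
    (N : ℕ) (hN : 2 ≤ N) (c : ℕ → ℝ) (hc : ∀ i : ℕ, i < N → c i < c (i + 1))
    (f : ℝ → ℝ) (hmap : Set.MapsTo f (Set.Icc (c 0) (c N)) (Set.Icc (c 0) (c N)))
    (lam : ℝ) (hlam : lam ∈ Set.Ioo (0 : ℝ) 1)
    (hcontr : ∀ i : Fin N, ∀ x ∈ ivlPiece N c i, ∀ y ∈ ivlPiece N c i,
      |f x - f y| ≤ lam * |x - y|)
    (hsep : ∃ g : Fin N → ℝ → ℝ, ∀ i : Fin N,
      ContinuousOn (g i) (closure (ivlPiece N c i)) ∧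
      Set.EqOn (g i) f (ivlPiece N c i) ∧
      Set.InjOn (g i) (closure (ivlPiece N c i)) ∧
      ∀ j : Fin N, j ≠ i →
        Disjoint (g i '' closure (ivlPiece N c i)) (g j '' closure (ivlPiece N c j)))
    (x : ℝ) (hx : x ∈ Set.Icc (c 0) (c N))
    (hxD : ∀ t : ℕ, f^[t] x ∉ ivlDelta N c)
    (θ : ℕ → Fin N) (hθ : ∀ t : ℕ, f^[t] x ∈ ivlPiece N c (θ t))
    :
    ∀ n : ℕ, 1 ≤ n →
      seqComplexity θ n + (ivlDeltaLRn N c f n x).ncard ≤ seqComplexity θ (n + 1) ∧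
      seqComplexity θ (n + 1) ≤ seqComplexity θ n + (ivlDelta N c).ncard := by
  classical
  obtain ⟨g, hg⟩ := hsep
  intro n hn
  have hFf := factors_finite θ n
  have hEf := factors_finite θ (n + 1)
  have hDf : (ivlDelta N c).Finite := by
    refine ((Set.finite_Icc 0 N).image c).subset ?_
    rintro y ⟨i, h1, h2, rfl⟩
    exact ⟨i, ⟨by omega, by omega⟩, rfl⟩
  have hSf : (ivlDeltaLRn N c f n x).Finite := by
    refine hDf.subset ?_
    rintro y ⟨i, h1, h2, hy, _⟩
    exact ⟨i, h1, h2, hy⟩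
  set d0 : Fin N := ⟨0, by omega⟩ with hd0
  -- upper bound
  have hupper : hEf.toFinset.card ≤ hFf.toFinset.card + hDf.toFinset.card := by
    rw [← Finset.card_disjSum]
    set L : List (Fin N) → Finset (Fin N) :=
      fun w => Finset.univ.filter (fun a => w ++ [a] ∈ seqFactors θ (n + 1)) with hL
    set mw : List (Fin N) → Fin N :=
      fun w => if h : (L w).Nonempty then (L w).min' h else d0 with hmw
    have hmemL : ∀ {w : List (Fin N)} {a : Fin N},
        a ∈ L w ↔ w ++ [a] ∈ seqFactors θ (n + 1) := by
      intro w a; simp [hL]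
    -- facts about non-minimal letters
    have hkey : ∀ {w : List (Fin N)} {a : Fin N}, a ∈ L w → a ≠ mw w →
        1 ≤ a.val ∧ c a.val ∈ ivlAtom N c f w := by
      intro w a haL hane
      have hne : (L w).Nonempty := ⟨a, haL⟩
      have hmweq : mw w = (L w).min' hne := by rw [hmw]; simp [hne]
      have hlt : (mw w).val < a.val := by
        have h1 : mw w ≤ a := hmweq ▸ Finset.min'_le _ _ haL
        have h2 : mw w ≠ a := fun h => hane h.symm
        exact lt_of_le_of_ne (Fin.le_def.mp h1) (fun h => h2 (Fin.ext h))
      have hmwL : mw w ∈ L w := hmweq ▸ Finset.min'_mem _ hne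
      obtain ⟨z₀, hz₀⟩ := atom_meets hmap hx hθ (hmemL.mp hmwL)
      obtain ⟨z, hz⟩ := atom_meets hmap hx hθ (hmemL.mp haL)
      exact ⟨by omega, atom_contains_c hN hc hmap hg hlt hz₀ hz⟩
    refine Finset.card_le_card_of_injOn
      (fun u => if u.getLastD d0 = mw u.dropLast then Sum.inl u.dropLast
        else Sum.inr (c (u.getLastD d0).val)) ?_ ?_
    · intro u hu
      obtain ⟨t, rfl⟩ := hEf.mem_toFinset.mp hu
      rw [itinWord_succ]
      simp only [List.dropLast_concat, List.getLastD_concat]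
      have haL : θ (t + n) ∈ L (itinWord θ t n) :=
        hmemL.mpr ⟨t, (itinWord_succ t n).symm⟩
      split_ifs with h
      · exact Finset.inl_mem_disjSum.mpr (hFf.mem_toFinset.mpr ⟨t, rfl⟩)
      · have h1 := (hkey haL h).1
        have h2 := (θ (t + n)).isLt
        exact Finset.inr_mem_disjSum.mpr
          (hDf.mem_toFinset.mpr ⟨(θ (t + n)).val, by omega, h2, rfl⟩)
    · intro u hu u' hu' heq
      simp only [Set.Finite.coe_toFinset] at hu hu'
      obtain ⟨t, rfl⟩ := hu
      obtain ⟨t', rfl⟩ := hu'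
      rw [itinWord_succ, itinWord_succ]
      rw [show itinWord θ t (n+1) = itinWord θ t n ++ [θ (t + n)] from itinWord_succ t n,
        show itinWord θ t' (n+1) = itinWord θ t' n ++ [θ (t' + n)] from itinWord_succ t' n]
        at heq
      simp only [List.dropLast_concat, List.getLastD_concat] at heq
      have haL : θ (t + n) ∈ L (itinWord θ t n) :=
        hmemL.mpr ⟨t, (itinWord_succ t n).symm⟩
      have haL' : θ (t' + n) ∈ L (itinWord θ t' n) :=
        hmemL.mpr ⟨t', (itinWord_succ t' n).symm⟩
      by_cases h1 : θ (t + n) = mw (itinWord θ t n)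
        <;> by_cases h2 : θ (t' + n) = mw (itinWord θ t' n)
      · rw [if_pos h1, if_pos h2] at heq
        simp only [Sum.inl.injEq] at heq
        rw [heq] at h1
        rw [h1, h2, heq]
      · rw [if_pos h1, if_neg h2] at heq
        exact absurd heq (by simp)
      · rw [if_neg h1, if_pos h2] at heq
        exact absurd heq (by simp)
      · rw [if_neg h1, if_neg h2] at heq
        simp only [Sum.inr.injEq] at heq
        obtain ⟨ha1, hca⟩ := hkey haL h1
        obtain ⟨ha1', hca'⟩ := hkey haL' h2
        have hvals : (θ (t + n)).val = (θ (t' + n)).val := by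
          by_contra hne
          have hN1 := (θ (t + n)).isLt
          have hN2 := (θ (t' + n)).isLt
          rcases Nat.lt_or_ge (θ (t + n)).val (θ (t' + n)).val with h | h
          · exact absurd heq (ne_of_lt (cmono' hc h (by omega)))
          · exact absurd heq.symm (ne_of_lt (cmono' hc (by omega) (by omega)))
        have haeq : θ (t + n) = θ (t' + n) := Fin.ext hvals
        have hweq : itinWord θ t n = itinWord θ t' n := by
          by_contra hwne
          have hlen : (itinWord θ t n).length = (itinWord θ t' n).length := by
            rw [itinWord_length, itinWord_length]
          have hnn : itinWord θ t n ≠ [] := by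
            intro h
            have := itinWord_length (θ := θ) t n
            rw [h] at this; simp at this; omega
          rw [heq] at hca
          exact atoms_disjoint hN hc hmap hg _ _ hlen hnn hwne _ hca hca'
        rw [hweq, haeq]
  -- lower bound
  have spec : ∀ y ∈ ivlDeltaLRn N c f n x, ∃ (a b : Fin N) (w : List (Fin N)),
      a.val + 1 = b.val ∧ y = c b.val ∧ w ∈ seqFactors θ n ∧
      w ++ [a] ∈ seqFactors θ (n + 1) ∧ w ++ [b] ∈ seqFactors θ (n + 1) := by
    rintro y ⟨i, h1, h2, hy, w, hwlen, hyA, ⟨t₁, ht₁⟩, ⟨t₂, ht₂⟩⟩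
    have e1 : itinWord θ t₁ n = w :=
      word_eq_itin hN hc hmap hg hx hθ hn hwlen ht₁.1
    have e2 : θ (t₁ + n) = ⟨i - 1, by omega⟩ := theta_eq hN hc hθ _ ht₁.2
    have e3 : itinWord θ t₂ n = w :=
      word_eq_itin hN hc hmap hg hx hθ hn hwlen ht₂.1
    have e4 : θ (t₂ + n) = ⟨i, h2⟩ := theta_eq hN hc hθ _ ht₂.2
    refine ⟨⟨i - 1, by omega⟩, ⟨i, h2⟩, w, by simp; omega, by simpa using hy,
      ⟨t₁, e1.symm⟩, ⟨t₁, ?_⟩, ⟨t₂, ?_⟩⟩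
    · rw [itinWord_succ, e1, e2]
    · rw [itinWord_succ, e3, e4]
  haveI : NeZero N := ⟨by omega⟩
  choose! afn bfn wfn hab hyb hwF haE hbE using spec
  have hlower : hFf.toFinset.card + hSf.toFinset.card ≤ hEf.toFinset.card := by
    have hE_card : hEf.toFinset.card
        = ∑ w ∈ hFf.toFinset, ((hEf.toFinset).filter fun u => u.dropLast = w).card := by
      refine Finset.card_eq_sum_card_fiberwise ?_
      intro u hu
      obtain ⟨t, rfl⟩ := hEf.mem_toFinset.mp hu
      rw [itinWord_succ, List.dropLast_concat]
      exact hFf.mem_toFinset.mpr ⟨t, rfl⟩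
    have hS_card : hSf.toFinset.card
        = ∑ w ∈ hFf.toFinset, ((hSf.toFinset).filter fun y => wfn y = w).card := by
      refine Finset.card_eq_sum_card_fiberwise ?_
      intro y hy
      exact hFf.mem_toFinset.mpr (hwF y (hSf.mem_toFinset.mp hy))
    have hper : ∀ w ∈ hFf.toFinset,
        ((hSf.toFinset).filter fun y => wfn y = w).card + 1
          ≤ ((hEf.toFinset).filter fun u => u.dropLast = w).card := by
      intro w hwmem
      set Sw := (hSf.toFinset).filter fun y => wfn y = w with hSw
      set Ew := (hEf.toFinset).filter fun u => u.dropLast = w with hEw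
      have hSmem : ∀ y ∈ Sw, y ∈ ivlDeltaLRn N c f n x ∧ wfn y = w := by
        intro y hy
        obtain ⟨hyS, hyw⟩ := Finset.mem_filter.mp hy
        exact ⟨hSf.mem_toFinset.mp hyS, hyw⟩
      have hsubE : ∀ y ∈ Sw, w ++ [bfn y] ∈ Ew := by
        intro y hy
        obtain ⟨hyD, hyw⟩ := hSmem y hy
        refine Finset.mem_filter.mpr ⟨hEf.mem_toFinset.mpr ?_, List.dropLast_concat⟩
        exact hyw ▸ hbE y hyD
      set A := Sw.image (fun y => w ++ [bfn y]) with hA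
      have hAsub : A ⊆ Ew := by
        intro u hu
        obtain ⟨y, hy, rfl⟩ := Finset.mem_image.mp hu
        exact hsubE y hy
      have hAcard : A.card = Sw.card := by
        refine Finset.card_image_of_injOn ?_
        intro y hy y' hy' he
        have he' : w ++ [bfn y] = w ++ [bfn y'] := he
        have hb : bfn y = bfn y' := by
          rw [← List.concat_eq_append, ← List.concat_eq_append, List.concat_inj] at he'
          exact he'.2
        rw [hyb y (hSmem y hy).1, hyb y' (hSmem y' hy').1, hb]
      rcases Finset.eq_empty_or_nonempty Sw with hSwe | hSwne
      · rw [hSwe]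
        simp only [Finset.card_empty, zero_add]
        obtain ⟨t, rfl⟩ := hFf.mem_toFinset.mp hwmem
        have hmem : itinWord θ t (n + 1) ∈ Ew := by
          refine Finset.mem_filter.mpr ⟨hEf.mem_toFinset.mpr ⟨t, rfl⟩, ?_⟩
          rw [itinWord_succ, List.dropLast_concat]
        exact Finset.card_pos.mpr ⟨_, hmem⟩
      · have hne : (Sw.image bfn).Nonempty := hSwne.image _
        obtain ⟨y₀, hy₀, hb₀⟩ := Finset.mem_image.mp ((Sw.image bfn).min'_mem hne)
        obtain ⟨hy₀D, hwy₀⟩ := hSmem y₀ hy₀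
        have hextra : w ++ [afn y₀] ∈ Ew := by
          refine Finset.mem_filter.mpr ⟨hEf.mem_toFinset.mpr ?_, List.dropLast_concat⟩
          exact hwy₀ ▸ haE y₀ hy₀D
        have hnotin : w ++ [afn y₀] ∉ A := by
          intro hmem
          obtain ⟨y, hyS, heq⟩ := Finset.mem_image.mp hmem
          have hba : bfn y = afn y₀ := by
            rw [← List.concat_eq_append, ← List.concat_eq_append, List.concat_inj] at heq
            exact heq.2
          have h1 := hab y₀ hy₀D
          have h2 : (Sw.image bfn).min' hne ≤ bfn y :=
            Finset.min'_le _ _ (Finset.mem_image_of_mem _ hyS)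
          rw [← hb₀] at h2
          have h3 : (bfn y₀).val ≤ (bfn y).val := Fin.le_def.mp h2
          have h4 : (bfn y).val = (afn y₀).val := by rw [hba]
          omega
        calc Sw.card + 1 = (insert (w ++ [afn y₀]) A).card := by
              rw [Finset.card_insert_of_notMem hnotin, hAcard]
          _ ≤ Ew.card := Finset.card_le_card (Finset.insert_subset hextra hAsub)
    calc hFf.toFinset.card + hSf.toFinset.card
        = ∑ w ∈ hFf.toFinset,
            (((hSf.toFinset).filter fun y => wfn y = w).card + 1) := by
          rw [hS_card, Finset.sum_add_distrib, Finset.sum_const, smul_eq_mul, mul_one]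
          ring
      _ ≤ ∑ w ∈ hFf.toFinset, ((hEf.toFinset).filter fun u => u.dropLast = w).card :=
          Finset.sum_le_sum hper
      _ = hEf.toFinset.card := hE_card.symm
  have c1 : (seqFactors θ n).ncard = hFf.toFinset.card := Set.ncard_eq_toFinset_card _ hFf
  have c2 : (seqFactors θ (n + 1)).ncard = hEf.toFinset.card :=
    Set.ncard_eq_toFinset_card _ hEf
  have c3 : (ivlDeltaLRn N c f n x).ncard = hSf.toFinset.card :=
    Set.ncard_eq_toFinset_card _ hSf
  have c4 : (ivlDelta N c).ncard = hDf.toFinset.card := Set.ncard_eq_toFinset_card _ hDf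
  unfold seqComplexity
  constructor
  · rw [c1, c2, c3]; exact hlower
  · rw [c1, c2, c4]; exact hupper
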